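/- arXiv:1907.03156 — 4 statements merged into one kernel-verified Lean document; each statement's English description precedes it below -/
import Mathlib

section
/- Suppose 2N×2N block matrices Y^L_n, Y^R_n (with N×N blocks built from matrices P^L_n, Q^L_n, P^L_{n-1}, Q^L_{n-1}, C_{n-1} and P^R_n, Q^R_n, P^R_{n-1}, Q^R_{n-1}) satisfy Y^L_n = [[P^L_n, Q^L_n],[−C_{n-1}P^L_{n-1}, −C_{n-1}Q^L_{n-1}]] and Y^R_n = [[P^R_n, −P^R_{n-1}C_{n-1}],[Q^R_n, −Q^R_{n-1}C_{n-1}]], and that (Y^L_n)⁻¹ = J·Y^R_n·J⁻¹ where J = [[0,I],[−I,0]]. Then: Q^L_n·P^R_{n-1} − P^L_n·Q^R_{n-1} = C_{n-1}⁻¹, P^L_{n-1}·Q^R_n − Q^L_{n-1}·P^R_n = C_{n-1}⁻¹, and Q^L_n·P^R_n − P^L_n·Q^R_n = 0. -/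
/-!
Conjugating by `J = [[0, I], [-I, 0]]` sends a block matrix `[[A, B], [C, D]]` to
`[[D, -C], [-B, A]]`, so the hypothesis is an explicit product of two block matrices equal to the
identity. Its `(1,1)` and `(2,2)` blocks say that `C_{n-1}` has the claimed right and left
inverses, and its `(1,2)` block is the third identity.
-/

open Matrix

section BlockConjugation

variable {n R : Type*} [Fintype n] [DecidableEq n] [CommRing R]

lemma inv_fromBlocks_zero_one_neg_one_zero :
    (fromBlocks 0 1 (-1) 0 : Matrix (n ⊕ n) (n ⊕ n) R)⁻¹ = fromBlocks 0 (-1) 1 0 := by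
  apply inv_eq_right_inv
  simp [fromBlocks_multiply, ← fromBlocks_one]

lemma fromBlocks_zero_one_neg_one_zero_conj (A B C D : Matrix n n R) :
    fromBlocks 0 1 (-1) 0 * fromBlocks A B C D * (fromBlocks 0 1 (-1) 0)⁻¹ =
      fromBlocks D (-C) (-B) A := by
  simp [inv_fromBlocks_zero_one_neg_one_zero, fromBlocks_multiply]

end BlockConjugation

theorem stmt_4_general (N : ℕ)
    (PLn QLn PLn1 QLn1 PRn QRn PRn1 QRn1 Cn1 : Matrix (Fin N) (Fin N) ℂ)
    (YL : Matrix (Fin N ⊕ Fin N) (Fin N ⊕ Fin N) ℂ)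
    (YR : Matrix (Fin N ⊕ Fin N) (Fin N ⊕ Fin N) ℂ)
    (J : Matrix (Fin N ⊕ Fin N) (Fin N ⊕ Fin N) ℂ)
    (hYL : YL = fromBlocks PLn QLn (-(Cn1 * PLn1)) (-(Cn1 * QLn1)))
    (hYR : YR = fromBlocks PRn (-(PRn1 * Cn1)) QRn (-(QRn1 * Cn1)))
    (hJ : J = fromBlocks 0 1 (-1) 0)
    (hinv : YL * (J * YR * J⁻¹) = 1) :
    QLn * PRn1 - PLn * QRn1 = Cn1⁻¹ ∧
    PLn1 * QRn - QLn1 * PRn = Cn1⁻¹ ∧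
    QLn * PRn - PLn * QRn = 0 := by
  subst hYL hYR hJ
  rw [fromBlocks_zero_one_neg_one_zero_conj, fromBlocks_multiply, ← fromBlocks_one,
    fromBlocks_inj] at hinv
  obtain ⟨h11, h12, -, h22⟩ := hinv
  have right_inv : (QLn * PRn1 - PLn * QRn1) * Cn1 = 1 := by
    rw [← h11]; noncomm_ring
  have left_inv : Cn1 * (PLn1 * QRn - QLn1 * PRn) = 1 := by
    rw [← h22]; noncomm_ring
  refine ⟨(inv_eq_left_inv right_inv).symm, (inv_eq_right_inv left_inv).symm, ?_⟩
  rw [← h12]; noncomm_ring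

/-- Entrywise identities resulting from the inversion formula
`(Y^L_n)⁻¹ = J Y^R_n J⁻¹` for the fundamental matrices of the Riemann–Hilbert problem. -/
theorem stmt_4 (N : ℕ)
    (PLn QLn PLn1 QLn1 PRn QRn PRn1 QRn1 Cn1 : Matrix (Fin N) (Fin N) ℂ)
    (hC : IsUnit Cn1)
    (YL : Matrix (Fin N ⊕ Fin N) (Fin N ⊕ Fin N) ℂ)
    (YR : Matrix (Fin N ⊕ Fin N) (Fin N ⊕ Fin N) ℂ)
    (J : Matrix (Fin N ⊕ Fin N) (Fin N ⊕ Fin N) ℂ)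
    (hYL : YL = fromBlocks PLn QLn (-(Cn1 * PLn1)) (-(Cn1 * QLn1)))
    (hYR : YR = fromBlocks PRn (-(PRn1 * Cn1)) QRn (-(QRn1 * Cn1)))
    (hJ : J = fromBlocks 0 1 (-1) 0)
    (hinv : YL * (J * YR * J⁻¹) = 1) :
    QLn * PRn1 - PLn * QRn1 = Cn1⁻¹ ∧
    PLn1 * QRn - QLn1 * PRn = Cn1⁻¹ ∧
    QLn * PRn - PLn * QRn = 0 :=
  stmt_4_general N PLn QLn PLn1 QLn1 PRn QRn PRn1 QRn1 Cn1 YL YR J hYL hYR hJ hinv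
end

section
/- Let W : (0,∞) → Mat(N,ℂ) be twice differentiable and satisfy the Pearson equation z·W'(z) = h^L(z)·W(z) + W(z)·h^R(z) with h^L, h^R differentiable. Set a^L := 2h^L + I_N, b^L := 𝒩(h^L) = (h^L)' + (h^L)²/z, and similarly a^R, b^R. Then (z·W)'' − (a^L·W)' + b^L·W = W·b^R. -/
/-!
Differentiating the Pearson equation `z W' = h^L W + W h^R` once gives
`W' + z W'' = (h^L)' W + h^L W' + W' h^R + W (h^R)'`, which eliminates `W''` from
`(zW)'' - (a^L W)'`. What remains, multiplied by `z`, is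
`z (W' h^R - h^L W') + (h^L)² W`; substituting the Pearson equation for `z W'` once more
turns it into `W (h^R)²`.
-/

open Filter Topology

/-- Entrywise derivative of a matrix-valued function of a real variable. -/
noncomputable def RDeriv {N : ℕ} (W : ℝ → Matrix (Fin N) (Fin N) ℂ) (t : ℝ) :
    Matrix (Fin N) (Fin N) ℂ :=
  Matrix.of fun i j => deriv (fun s => W s i j) t
theorem pearson_second_order_identity {A : Type*} [Ring A] [Algebra ℝ A] {z : ℝ} (hz : z ≠ 0)
    {hL hL' hR hR' w w' w'' : A}
    (hP : z • w' = hL * w + w * hR)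
    (hP' : w' + z • w'' = hL' * w + hL * w' + (w' * hR + w * hR')) :
    (2 : ℝ) • w' + z • w'' - ((2 : ℝ) • hL' * w + ((2 : ℝ) • hL + 1) * w')
      + (hL' + z⁻¹ • (hL * hL)) * w = w * (hR' + z⁻¹ • (hR * hR)) := by
  have hsq : z • (w' * hR - hL * w') + hL * hL * w = w * (hR * hR) := by
    rw [smul_sub, ← smul_mul_assoc, ← mul_smul_comm, hP]; noncomm_ring
  calc _ = (w' + z • w'') - hL' * w - (2 : ℝ) • (hL * w') + z⁻¹ • (hL * hL * w) := by
        simp only [two_smul, add_mul, smul_mul_assoc, one_mul]; abel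
    _ = w * hR' + z⁻¹ • (z • (w' * hR - hL * w') + hL * hL * w) := by
        rw [hP', smul_add, inv_smul_smul₀ hz, two_smul]; abel
    _ = _ := by rw [hsq, mul_add, mul_smul_comm]

def EntrywiseDifferentiableAt {m n : Type*} (F : ℝ → Matrix m n ℂ) (t : ℝ) : Prop :=
  ∀ i j, DifferentiableAt ℝ (fun s => F s i j) t

namespace EntrywiseDifferentiableAt

variable {l m n : Type*} {F G : ℝ → Matrix m n ℂ} {t : ℝ}

theorem add (hF : EntrywiseDifferentiableAt F t) (hG : EntrywiseDifferentiableAt G t) :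
    EntrywiseDifferentiableAt (fun s => F s + G s) t :=
  fun i j => (hF i j).add (hG i j)

theorem add_const (hF : EntrywiseDifferentiableAt F t) (M : Matrix m n ℂ) :
    EntrywiseDifferentiableAt (fun s => F s + M) t :=
  fun i j => (hF i j).add_const (M i j)

theorem const_smul (hF : EntrywiseDifferentiableAt F t) (c : ℂ) :
    EntrywiseDifferentiableAt (fun s => c • F s) t :=
  fun i j => (hF i j).const_mul c

theorem smul_id (hF : EntrywiseDifferentiableAt F t) :
    EntrywiseDifferentiableAt (fun s => s • F s) t :=
  fun i j => differentiableAt_id.smul (hF i j)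

theorem mul [Fintype n] {F : ℝ → Matrix l n ℂ} {G : ℝ → Matrix n m ℂ}
    (hF : EntrywiseDifferentiableAt F t) (hG : EntrywiseDifferentiableAt G t) :
    EntrywiseDifferentiableAt (fun s => F s * G s) t := fun i j => by
  simp only [Matrix.mul_apply]
  exact DifferentiableAt.fun_sum fun k _ => (hF i k).mul (hG k j)

end EntrywiseDifferentiableAt

section RDeriv

variable {N : ℕ} {F G : ℝ → Matrix (Fin N) (Fin N) ℂ} {t : ℝ}

theorem RDeriv_congr_of_eventuallyEq (h : F =ᶠ[𝓝 t] G) : RDeriv F t = RDeriv G t := by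
  ext i j
  exact Filter.EventuallyEq.deriv_eq (h.mono fun s hs => congrFun (congrFun hs i) j)

theorem RDeriv_add (hF : EntrywiseDifferentiableAt F t) (hG : EntrywiseDifferentiableAt G t) :
    RDeriv (fun s => F s + G s) t = RDeriv F t + RDeriv G t := by
  ext i j
  exact deriv_fun_add (hF i j) (hG i j)

theorem RDeriv_add_const (M : Matrix (Fin N) (Fin N) ℂ) :
    RDeriv (fun s => F s + M) t = RDeriv F t := by
  ext i j
  exact deriv_add_const (M i j)

theorem RDeriv_const_smul (c : ℂ) : RDeriv (fun s => c • F s) t = c • RDeriv F t := by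
  ext i j
  exact deriv_const_mul_field c

theorem RDeriv_mul (hF : EntrywiseDifferentiableAt F t) (hG : EntrywiseDifferentiableAt G t) :
    RDeriv (fun s => F s * G s) t = RDeriv F t * G t + F t * RDeriv G t := by
  ext i j
  simp only [RDeriv, Matrix.of_apply, Matrix.add_apply, Matrix.mul_apply]
  rw [deriv_fun_sum fun k _ => (hF i k).fun_mul (hG k j), ← Finset.sum_add_distrib]
  exact Finset.sum_congr rfl fun k _ => deriv_fun_mul (hF i k) (hG k j)

theorem RDeriv_smul_id (hF : EntrywiseDifferentiableAt F t) :
    RDeriv (fun s => s • F s) t = F t + t • RDeriv F t := by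
  ext i j
  simp only [RDeriv, Matrix.of_apply, Matrix.add_apply, Matrix.smul_apply]
  rw [deriv_fun_smul differentiableAt_fun_id (hF i j)]
  simp [add_comm]

theorem RDeriv_RDeriv_smul_id (hF : ∀ᶠ s in 𝓝 t, EntrywiseDifferentiableAt F s)
    (hF' : EntrywiseDifferentiableAt (RDeriv F) t) :
    RDeriv (RDeriv fun s => s • F s) t = (2 : ℝ) • RDeriv F t + t • RDeriv (RDeriv F) t := by
  rw [RDeriv_congr_of_eventuallyEq (hF.mono fun s hs => RDeriv_smul_id hs),
    RDeriv_add hF.self_of_nhds hF'.smul_id, RDeriv_smul_id hF', two_smul, add_assoc]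

end RDeriv

/-- If `W` satisfies the Pearson equation `z W' = h^L W + W h^R` on `(0,∞)`, then with
`a^L = 2h^L + I`, `b^L = (h^L)' + (h^L)²/z` (and similarly `b^R`), one has
`(zW)'' − (a^L W)' + b^L W = W b^R`. -/
theorem stmt_9 (N : ℕ)
    (W hL hR : ℝ → Matrix (Fin N) (Fin N) ℂ)
    (hWdiff : ∀ t > (0:ℝ), ∀ i j, DifferentiableAt ℝ (fun s => W s i j) t)
    (hWdiff2 : ∀ t > (0:ℝ), ∀ i j, DifferentiableAt ℝ (fun s => RDeriv W s i j) t)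
    (hhLdiff : ∀ t > (0:ℝ), ∀ i j, DifferentiableAt ℝ (fun s => hL s i j) t)
    (hhRdiff : ∀ t > (0:ℝ), ∀ i j, DifferentiableAt ℝ (fun s => hR s i j) t)
    (hPearson : ∀ t > (0:ℝ), t • RDeriv W t = hL t * W t + W t * hR t) :
    ∀ z > (0:ℝ),
      RDeriv (RDeriv (fun t => t • W t)) z
        - RDeriv (fun t => ((2:ℂ) • hL t + 1) * W t) z
        + (RDeriv hL z + z⁻¹ • (hL z * hL z)) * W z
      = W z * (RDeriv hR z + z⁻¹ • (hR z * hR z)) := by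
  intro z hz
  have hpos : ∀ᶠ t in 𝓝 z, 0 < t := eventually_gt_nhds hz
  have hW : EntrywiseDifferentiableAt W z := hWdiff z hz
  have hW' : EntrywiseDifferentiableAt (RDeriv W) z := hWdiff2 z hz
  have hhL : EntrywiseDifferentiableAt hL z := hhLdiff z hz
  have hhR : EntrywiseDifferentiableAt hR z := hhRdiff z hz
  have hPearson' : RDeriv W z + z • RDeriv (RDeriv W) z
      = RDeriv hL z * W z + hL z * RDeriv W z + (RDeriv W z * hR z + W z * RDeriv hR z) := by
    rw [← RDeriv_smul_id hW', RDeriv_congr_of_eventuallyEq (hpos.mono hPearson),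
      RDeriv_add (hhL.mul hW) (hW.mul hhR), RDeriv_mul hhL hW, RDeriv_mul hW hhR]
  have haW : RDeriv (fun t => ((2:ℂ) • hL t + 1) * W t) z
      = (2 : ℝ) • RDeriv hL z * W z + ((2 : ℝ) • hL z + 1) * RDeriv W z := by
    rw [RDeriv_mul ((hhL.const_smul 2).add_const 1) hW, RDeriv_add_const, RDeriv_const_smul]
    simp only [two_smul]
  rw [RDeriv_RDeriv_smul_id (hpos.mono fun t ht => hWdiff t ht) hW', haW]
  exact pearson_second_order_identity hz.ne' (hPearson z hz) hPearson'
end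

section
/- Suppose sequences of N×N matrices β_n, γ_n, ξ_n, μ_n satisfy the commutative dPIV system: all of {A, C, β_n, γ_n} pairwise commute, ξ_n = A/2 + n·I + C·γ_n, μ_n = C·β_n + B (with B also commuting with everything), and the two relations β_n·μ_n = −(ξ_n + ξ_{n+1}) and β_n·(ξ_n − ξ_{n+1}) = −γ_n·μ_{n-1} + γ_{n+1}·μ_{n+1}. Then ξ_{n+1}² − ξ_n² = γ_{n+1}·μ_n·μ_{n+1} − γ_n·μ_{n-1}·μ_n. -/
/-!
Factor `ξ_{n+1}² − ξ_n² = (ξ_{n+1} + ξ_n)(ξ_{n+1} − ξ_n)`. The first relation turns the first factor into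
`−β_n μ_n`, and once `μ_n` is moved to the front the second relation evaluates `μ_n · β_n (ξ_n − ξ_{n+1})`.
The commutation relations serve only to move factors past each other.
-/

section Noncommutative

variable {R : Type*}

theorem sq_sub_sq_eq_of_dPIV [Ring R] {x x' b m g g' m₀ m' : R} (hxx : Commute x' x)
    (hbm : Commute b m) (hmg : Commute m g) (hmg' : Commute m g') (hmm : Commute m m₀)
    (h1 : b * m = -(x + x')) (h2 : b * (x - x') = -(g * m₀) + g' * m') :
    x' ^ 2 - x ^ 2 = g' * m * m' - g * m₀ * m := by
  have hsum : x' + x = -(b * m) := by rw [h1, add_comm x]; abel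
  calc x' ^ 2 - x ^ 2
      = (x' + x) * (x' - x) := hxx.sq_sub_sq
    _ = m * (b * (x - x')) := by rw [hsum, neg_mul, ← mul_neg, neg_sub, hbm.eq, mul_assoc]
    _ = g' * m * m' - g * m₀ * m := by
        rw [h2, mul_add, mul_neg, ← mul_assoc, ← mul_assoc, hmg.eq, hmg'.eq, mul_assoc g, hmm.eq,
          ← mul_assoc]
        abel

variable [Semiring R] {a b c d : R}

theorem Commute.mul_mul_of_commute (hac : Commute a c) (had : Commute a d) (hbc : Commute b c)
    (hbd : Commute b d) : Commute (a * b) (c * d) :=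
  (hac.mul_right had).mul_left (hbc.mul_right hbd)

theorem Commute.smul_add_smul_one_left {𝕜 : Type*} [CommSemiring 𝕜] [Algebra 𝕜 R]
    (h : Commute a b) (s t : 𝕜) : Commute (s • a + t • 1) b :=
  (h.smul_left s).add_left ((Commute.one_left b).smul_left t)

end Noncommutative

theorem stmt_15_general (NN : ℕ)
    (A B C : Matrix (Fin NN) (Fin NN) ℂ)
    (β γ ξ μ : ℕ → Matrix (Fin NN) (Fin NN) ℂ)
    (hAC : Commute A C) (hBC : Commute B C)
    (hAγ : ∀ n, Commute A (γ n))
    (hBβ : ∀ n, Commute B (β n)) (hBγ : ∀ n, Commute B (γ n))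
    (hCβ : ∀ n, Commute C (β n)) (hCγ : ∀ n, Commute C (γ n))
    (hββ : ∀ m n, Commute (β m) (β n))
    (hβγ : ∀ m n, Commute (β m) (γ n))
    (hγγ : ∀ m n, Commute (γ m) (γ n))
    (hξ : ∀ n, ξ n = (1/2 : ℂ) • A + (n : ℂ) • (1 : Matrix (Fin NN) (Fin NN) ℂ) + C * γ n)
    (hμ : ∀ n, μ n = C * β n + B)
    (h1 : ∀ n, β n * μ n = -(ξ n + ξ (n + 1)))
    (h2 : ∀ n, β n * (ξ n - ξ (n + 1)) = -(γ n * μ (n - 1)) + γ (n + 1) * μ (n + 1)) :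
    ∀ n, ξ (n + 1) ^ 2 - ξ n ^ 2
      = γ (n + 1) * μ n * μ (n + 1) - γ n * μ (n - 1) * μ n := by
  have hACγ : ∀ k, Commute A (C * γ k) := fun k => hAC.mul_right (hAγ k)
  have hξξ : ∀ m k, Commute (ξ m) (ξ k) := fun m k => by
    rw [hξ, hξ]
    refine .add_left (.smul_add_smul_one_left (.add_right ?_ (hACγ k)) _ _) (.add_right ?_ ?_)
    · exact ((Commute.refl A).smul_add_smul_one_left _ _).symm
    · exact ((hACγ m).smul_add_smul_one_left _ _).symm
    · exact .mul_mul_of_commute (.refl C) (hCγ k) (hCγ m).symm (hγγ m k)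
  have hβμ : ∀ m k, Commute (β m) (μ k) := fun m k => by
    rw [hμ]
    exact .add_right ((hCβ m).symm.mul_right (hββ m k)) (hBβ m).symm
  have hμγ : ∀ m k, Commute (μ m) (γ k) := fun m k => by
    rw [hμ]
    exact .add_left ((hCγ k).mul_left (hβγ m k)) (hBγ k)
  have hμC : ∀ m, Commute (μ m) C := fun m => by
    rw [hμ]
    exact .add_left ((Commute.refl C).mul_left (hCβ m).symm) hBC
  have hμB : ∀ m, Commute (μ m) B := fun m => by
    rw [hμ]
    exact .add_left (hBC.symm.mul_left (hBβ m).symm) (.refl B)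
  have hμμ : ∀ m k, Commute (μ m) (μ k) := fun m k => by
    rw [hμ k]
    exact .add_right ((hμC m).mul_right (hβμ k m).symm) (hμB m)
  intro n
  exact sq_sub_sq_eq_of_dPIV (hξξ _ _) (hβμ n n) (hμγ n n) (hμγ n (n + 1)) (hμμ n (n - 1))
    (h1 n) (h2 n)

/-- In the commutative dPIV setting, the relations `β_n μ_n = −(ξ_n + ξ_{n+1})` and
`β_n (ξ_n − ξ_{n+1}) = −γ_n μ_{n-1} + γ_{n+1} μ_{n+1}` imply
`ξ_{n+1}² − ξ_n² = γ_{n+1} μ_n μ_{n+1} − γ_n μ_{n-1} μ_n`. -/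
theorem stmt_15 (NN : ℕ)
    (A B C : Matrix (Fin NN) (Fin NN) ℂ)
    (β γ ξ μ : ℕ → Matrix (Fin NN) (Fin NN) ℂ)
    (hAB : Commute A B) (hAC : Commute A C) (hBC : Commute B C)
    (hAβ : ∀ n, Commute A (β n)) (hAγ : ∀ n, Commute A (γ n))
    (hBβ : ∀ n, Commute B (β n)) (hBγ : ∀ n, Commute B (γ n))
    (hCβ : ∀ n, Commute C (β n)) (hCγ : ∀ n, Commute C (γ n))
    (hββ : ∀ m n, Commute (β m) (β n))
    (hβγ : ∀ m n, Commute (β m) (γ n))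
    (hγγ : ∀ m n, Commute (γ m) (γ n))
    (hξ : ∀ n, ξ n = (1/2 : ℂ) • A + (n : ℂ) • (1 : Matrix (Fin NN) (Fin NN) ℂ) + C * γ n)
    (hμ : ∀ n, μ n = C * β n + B)
    (h1 : ∀ n, β n * μ n = -(ξ n + ξ (n + 1)))
    (h2 : ∀ n, β n * (ξ n - ξ (n + 1)) = -(γ n * μ (n - 1)) + γ (n + 1) * μ (n + 1)) :
    ∀ n, ξ (n + 1) ^ 2 - ξ n ^ 2
      = γ (n + 1) * μ n * μ (n + 1) - γ n * μ (n - 1) * μ n :=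
  stmt_15_general NN A B C β γ ξ μ hAC hBC hAγ hBβ hBγ hCβ hCγ hββ hβγ hγγ hξ hμ h1 h2
end

section
/- In the commutative setting with B = 0, so μ_n = C·β_n, the relations β_n²·C = −(ξ_n + ξ_{n+1}) and ξ_{n+1}² − ξ_0² = γ_{n+1}·C²·β_n·β_{n+1} with C·γ_{n+1} = ξ_{n+1} − A/2 − n·I imply, for invertible relevant matrices, (ξ_n + ξ_{n+1})·(ξ_{n+1} + ξ_{n+2}) = ((ξ_{n+1} − A/2 − n·I)⁻¹·(ξ_{n+1}² − ξ_0²))², an instance of the discrete Painlevé IV equation. -/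
/-!
By the second and third relations, `(ξ_{n+1} − A/2 − nI) · (C β_n β_{n+1}) = ξ_{n+1}² − ξ_0²`,
so the right-hand side is `(C β_n β_{n+1})² = (β_n² C)(β_{n+1}² C)`, which the first relation
turns into `(ξ_n + ξ_{n+1})(ξ_{n+1} + ξ_{n+2})`.
-/

section Commuting

variable {M : Type*} [Monoid M] {c g b b' : M}

theorem mul_mul_mul_eq_mul_mul_of_commute (hg : Commute c g) (hb : Commute c b) :
    g * (c * b) * (c * b') = c * g * (c * b * b') := by
  rw [hg.eq]
  simp only [mul_assoc]
  rw [← mul_assoc b c, ← hb.eq, mul_assoc]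

theorem mul_mul_sq_of_commute (hb : Commute c b) (hb' : Commute c b') (hbb' : Commute b b') :
    (c * b * b') ^ 2 = b ^ 2 * c * (b' ^ 2 * c) := by
  rw [(hb'.mul_left hbb').mul_pow, hb.mul_pow, (hb.pow_pow 2 2).eq,
    ← (hb'.pow_right 2).eq]
  simp only [sq, mul_assoc]

end Commuting

theorem stmt_17_general (NN : ℕ)
    (A C : Matrix (Fin NN) (Fin NN) ℂ)
    (β γ ξ : ℕ → Matrix (Fin NN) (Fin NN) ℂ)
    (hCβ : ∀ n, Commute C (β n)) (hCγ : ∀ n, Commute C (γ n))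
    (hββ : ∀ m n, Commute (β m) (β n))
    (hinv : ∀ n : ℕ, IsUnit (ξ (n + 1) - (1/2 : ℂ) • A
      - (n : ℂ) • (1 : Matrix (Fin NN) (Fin NN) ℂ)))
    (h1 : ∀ n, β n ^ 2 * C = -(ξ n + ξ (n + 1)))
    (h2 : ∀ n, ξ (n + 1) ^ 2 - ξ 0 ^ 2 = γ (n + 1) * (C * β n) * (C * β (n + 1)))
    (h3 : ∀ n : ℕ, C * γ (n + 1) = ξ (n + 1) - (1/2 : ℂ) • A
      - (n : ℂ) • (1 : Matrix (Fin NN) (Fin NN) ℂ)) :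
    ∀ n : ℕ, (ξ n + ξ (n + 1)) * (ξ (n + 1) + ξ (n + 2))
      = ((ξ (n + 1) - (1/2 : ℂ) • A - (n : ℂ) • (1 : Matrix (Fin NN) (Fin NN) ℂ))⁻¹
          * (ξ (n + 1) ^ 2 - ξ 0 ^ 2)) ^ 2 := by
  intro n
  have hdet := (Matrix.isUnit_iff_isUnit_det _).mp (hinv n)
  rw [h2 n, mul_mul_mul_eq_mul_mul_of_commute (hCγ (n + 1)) (hCβ n), h3 n,
    ← mul_assoc, Matrix.nonsing_inv_mul _ hdet, one_mul,
    mul_mul_sq_of_commute (hCβ n) (hCβ (n + 1)) (hββ n (n + 1)), h1 n, h1 (n + 1), neg_mul_neg]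

/-- With `B = 0` (so `μ_n = C β_n`), the relations `β_n² C = −(ξ_n + ξ_{n+1})`,
`ξ_{n+1}² − ξ_0² = γ_{n+1} (C β_n)(C β_{n+1})` and `C γ_{n+1} = ξ_{n+1} − A/2 − n I`
imply the discrete Painlevé IV equation
`(ξ_n + ξ_{n+1})(ξ_{n+1} + ξ_{n+2}) = ((ξ_{n+1} − A/2 − nI)⁻¹ (ξ_{n+1}² − ξ_0²))²`. -/
theorem stmt_17 (NN : ℕ)
    (A C : Matrix (Fin NN) (Fin NN) ℂ)
    (β γ ξ : ℕ → Matrix (Fin NN) (Fin NN) ℂ)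
    (hAC : Commute A C)
    (hAβ : ∀ n, Commute A (β n)) (hAγ : ∀ n, Commute A (γ n))
    (hCβ : ∀ n, Commute C (β n)) (hCγ : ∀ n, Commute C (γ n))
    (hAξ : ∀ n, Commute A (ξ n)) (hCξ : ∀ n, Commute C (ξ n))
    (hββ : ∀ m n, Commute (β m) (β n)) (hβγ : ∀ m n, Commute (β m) (γ n))
    (hβξ : ∀ m n, Commute (β m) (ξ n)) (hγγ : ∀ m n, Commute (γ m) (γ n))
    (hγξ : ∀ m n, Commute (γ m) (ξ n)) (hξξ : ∀ m n, Commute (ξ m) (ξ n))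
    (hCinv : IsUnit C)
    (hinv : ∀ n : ℕ, IsUnit (ξ (n + 1) - (1/2 : ℂ) • A
      - (n : ℂ) • (1 : Matrix (Fin NN) (Fin NN) ℂ)))
    (h1 : ∀ n, β n ^ 2 * C = -(ξ n + ξ (n + 1)))
    (h2 : ∀ n, ξ (n + 1) ^ 2 - ξ 0 ^ 2 = γ (n + 1) * (C * β n) * (C * β (n + 1)))
    (h3 : ∀ n : ℕ, C * γ (n + 1) = ξ (n + 1) - (1/2 : ℂ) • A
      - (n : ℂ) • (1 : Matrix (Fin NN) (Fin NN) ℂ)) :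
    ∀ n : ℕ, (ξ n + ξ (n + 1)) * (ξ (n + 1) + ξ (n + 2))
      = ((ξ (n + 1) - (1/2 : ℂ) • A - (n : ℂ) • (1 : Matrix (Fin NN) (Fin NN) ℂ))⁻¹
          * (ξ (n + 1) ^ 2 - ξ 0 ^ 2)) ^ 2 :=
  stmt_17_general NN A C β γ ξ hCβ hCγ hββ hinv h1 h2 h3
end
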